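/- arXiv:1308.5147 — 2 statements merged into one kernel-verified Lean document; each statement's English description precedes it below -/
import Mathlib

section
/- Let {s_n}_{n≥0} be a nonincreasing sequence of nonnegative reals with Σ s_n^p < ∞ for some p > 1, and define σ_n = (n+1)^{-1} Σ_{j=0}^n s_j. Then Σ_{n≥0} σ_n^p ≤ (p/(p−1))^p Σ_{n≥0} s_n^p (Hardy's inequality for nonincreasing sequences). -/
/-!
Write `A n` for the mean of the first `n` terms and `q = p / (p - 1)`. Since
`s n = (n + 1) * A (n + 1) - n * A n`, Young's inequality
`y * x ^ (p - 1) ≤ y ^ p / p + x ^ p / q` gives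
`A (n + 1) ^ p - q * A (n + 1) ^ (p - 1) * s n ≤ (n * A n ^ p - (n + 1) * A (n + 1) ^ p) / (p - 1)`,
whose right-hand side telescopes to something nonpositive. Hence `∑ A ^ p ≤ q * ∑ A ^ (p - 1) * s`
over every initial segment; Hölder bounds the right-hand side by
`q * (∑ A ^ p) ^ (1 / q) * (∑ s ^ p) ^ (1 / p)`, and dividing out gives `∑ A ^ p ≤ q ^ p * ∑ s ^ p`.
-/

open Finset Real

/-- The mean of the first `n` terms; at `n = 0` the division by zero makes it `0`. -/
noncomputable def runningMean (s : ℕ → ℝ) (n : ℕ) : ℝ := (∑ j ∈ range n, s j) / n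

namespace runningMean

variable {s : ℕ → ℝ}

lemma nonneg (hs : ∀ n, 0 ≤ s n) (n : ℕ) : 0 ≤ runningMean s n :=
  div_nonneg (sum_nonneg fun j _ => hs j) n.cast_nonneg

lemma natCast_mul (s : ℕ → ℝ) (n : ℕ) : n * runningMean s n = ∑ j ∈ range n, s j := by
  rcases n.eq_zero_or_pos with rfl | hn
  · simp
  · exact mul_div_cancel₀ _ (by positivity)

lemma eq_succ_sub (s : ℕ → ℝ) (n : ℕ) :
    s n = (n + 1) * runningMean s (n + 1) - n * runningMean s n := by
  have h := natCast_mul s (n + 1)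
  rw [sum_range_succ, ← natCast_mul s n, Nat.cast_succ] at h
  linarith

end runningMean

namespace Real.HolderConjugate

variable {p q : ℝ}

lemma rpow_sub_one_rpow (hpq : p.HolderConjugate q) {x : ℝ} (hx : 0 ≤ x) :
    (x ^ (p - 1)) ^ q = x ^ p := by
  rw [← rpow_mul hx, hpq.sub_one_mul_conj]

lemma mul_rpow_sub_one_le (hpq : p.HolderConjugate q) {x y : ℝ} (hx : 0 ≤ x) (hy : 0 ≤ y) :
    y * x ^ (p - 1) ≤ y ^ p / p + x ^ p / q := by
  simpa only [hpq.rpow_sub_one_rpow hx] using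
    young_inequality_of_nonneg hy (rpow_nonneg hx (p - 1)) hpq

lemma le_rpow_mul_of_le_mul_rpow_mul_rpow (hpq : p.HolderConjugate q) {S T C : ℝ}
    (hS : 0 ≤ S) (hT : 0 ≤ T) (hC : 0 ≤ C) (h : S ≤ C * (S ^ (1 / q) * T ^ (1 / p))) :
    S ≤ C ^ p * T := by
  rcases hS.eq_or_lt with rfl | hS
  · positivity
  have hroot : S ^ (1 / p) ≤ C * T ^ (1 / p) := by
    refine le_of_mul_le_mul_left ?_ (rpow_pos_of_pos hS (1 / q))
    calc S ^ (1 / q) * S ^ (1 / p) = S := by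
          rw [← rpow_add hS, add_comm, hpq.one_div_add_one_div, div_one, rpow_one]
      _ ≤ C * (S ^ (1 / q) * T ^ (1 / p)) := h
      _ = S ^ (1 / q) * (C * T ^ (1 / p)) := by ring
  calc S = (S ^ (1 / p)) ^ p := by rw [one_div, rpow_inv_rpow hS.le hpq.ne_zero]
    _ ≤ (C * T ^ (1 / p)) ^ p := rpow_le_rpow (by positivity) hroot hpq.nonneg
    _ = C ^ p * T := by rw [mul_rpow hC (by positivity), one_div, rpow_inv_rpow hT hpq.ne_zero]

end Real.HolderConjugate

section

variable {p q : ℝ} {s : ℕ → ℝ}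

/-- With `x`, `y` the means of `c + 1` and `c` terms, `(c + 1) * x - c * y` is the new term. -/
lemma rpow_sub_mul_rpow_sub_one_le (hpq : p.HolderConjugate q) {x y c : ℝ} (hx : 0 ≤ x)
    (hy : 0 ≤ y) (hc : 0 ≤ c) :
    x ^ p - q * x ^ (p - 1) * ((c + 1) * x - c * y) ≤
      (c * y ^ p - (c + 1) * x ^ p) / (p - 1) := by
  have hxx : x ^ (p - 1) * x = x ^ p := by
    rw [← rpow_add_one' hx (by linarith [hpq.sub_one_pos]), sub_add_cancel]
  have hqc : 0 ≤ q * c := mul_nonneg hpq.symm.nonneg hc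
  calc x ^ p - q * x ^ (p - 1) * ((c + 1) * x - c * y)
      = x ^ p - q * (c + 1) * (x ^ (p - 1) * x) + q * c * (y * x ^ (p - 1)) := by ring
    _ ≤ x ^ p - q * (c + 1) * x ^ p + q * c * (y ^ p / p + x ^ p / q) := by
        rw [hxx]
        gcongr
        exact hpq.mul_rpow_sub_one_le hx hy
    _ = (c * y ^ p - (c + 1) * x ^ p) / (p - 1) := by
        obtain rfl : q = p / (p - 1) := hpq.conjExponent_eq.symm
        have := hpq.sub_one_ne_zero
        have := hpq.ne_zero
        field_simp
        ring

lemma runningMean_succ_rpow_sub_le (hpq : p.HolderConjugate q) (hs : ∀ n, 0 ≤ s n) (n : ℕ) :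
    runningMean s (n + 1) ^ p - q * runningMean s (n + 1) ^ (p - 1) * s n ≤
      (n * runningMean s n ^ p - (n + 1) * runningMean s (n + 1) ^ p) / (p - 1) := by
  rw [runningMean.eq_succ_sub s n]
  exact rpow_sub_mul_rpow_sub_one_le hpq (runningMean.nonneg hs _) (runningMean.nonneg hs _)
    n.cast_nonneg

lemma sum_runningMean_rpow_le_mul_sum (hpq : p.HolderConjugate q) (hs : ∀ n, 0 ≤ s n)
    (N : ℕ) :
    ∑ n ∈ range N, runningMean s (n + 1) ^ p ≤
      q * ∑ n ∈ range N, runningMean s (n + 1) ^ (p - 1) * s n := by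
  set f : ℕ → ℝ := fun n => n * runningMean s n ^ p
  have hfN : 0 ≤ f N := mul_nonneg N.cast_nonneg (rpow_nonneg (runningMean.nonneg hs N) p)
  calc ∑ n ∈ range N, runningMean s (n + 1) ^ p
      = ∑ n ∈ range N, (runningMean s (n + 1) ^ p - q * runningMean s (n + 1) ^ (p - 1) * s n)
          + q * ∑ n ∈ range N, runningMean s (n + 1) ^ (p - 1) * s n := by
        rw [mul_sum, ← sum_add_distrib]
        simp only [mul_assoc, sub_add_cancel]
    _ ≤ ∑ n ∈ range N, (f n - f (n + 1)) / (p - 1)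
          + q * ∑ n ∈ range N, runningMean s (n + 1) ^ (p - 1) * s n := by
        gcongr with n
        simpa [f] using runningMean_succ_rpow_sub_le hpq hs n
    _ = -f N / (p - 1) + q * ∑ n ∈ range N, runningMean s (n + 1) ^ (p - 1) * s n := by
        rw [← sum_div, sum_range_sub', show f 0 = 0 by simp [f], zero_sub]
    _ ≤ q * ∑ n ∈ range N, runningMean s (n + 1) ^ (p - 1) * s n := by
        have : -f N / (p - 1) ≤ 0 := div_nonpos_of_nonpos_of_nonneg (by linarith)
          hpq.sub_one_pos.le
        linarith

theorem sum_runningMean_rpow_le (hpq : p.HolderConjugate q) (hs : ∀ n, 0 ≤ s n) (N : ℕ) :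
    ∑ n ∈ range N, runningMean s (n + 1) ^ p ≤ q ^ p * ∑ n ∈ range N, s n ^ p := by
  have hmean := fun n => runningMean.nonneg hs n
  have holder : ∑ n ∈ range N, runningMean s (n + 1) ^ (p - 1) * s n ≤
      (∑ n ∈ range N, runningMean s (n + 1) ^ p) ^ (1 / q) *
        (∑ n ∈ range N, s n ^ p) ^ (1 / p) := by
    simpa only [hpq.rpow_sub_one_rpow (hmean _)] using
      inner_le_Lp_mul_Lq_of_nonneg (range N) hpq.symm
        (fun n _ => rpow_nonneg (hmean (n + 1)) (p - 1)) (fun n _ => hs n)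
  exact hpq.le_rpow_mul_of_le_mul_rpow_mul_rpow (sum_nonneg fun n _ => rpow_nonneg (hmean _) p)
    (sum_nonneg fun n _ => rpow_nonneg (hs n) p) hpq.symm.nonneg
    ((sum_runningMean_rpow_le_mul_sum hpq hs N).trans
      (mul_le_mul_of_nonneg_left holder hpq.symm.nonneg))

end

theorem hardy_inequality_general (p : ℝ) (hp : 1 < p) (s : ℕ → ℝ)
    (hnn : ∀ n, 0 ≤ s n)
    (hsum : Summable fun n => s n ^ p) :
    Summable (fun n : ℕ => ((∑ j ∈ Finset.range (n + 1), s j) / (n + 1)) ^ p) ∧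
    ∑' n : ℕ, ((∑ j ∈ Finset.range (n + 1), s j) / (n + 1)) ^ p ≤
      (p / (p - 1)) ^ p * ∑' n : ℕ, s n ^ p := by
  have hpq : p.HolderConjugate (p / (p - 1)) := .conjExponent hp
  have hmean : ∀ n : ℕ, (∑ j ∈ range (n + 1), s j) / (n + 1) = runningMean s (n + 1) := by
    simp [runningMean]
  have hbound : ∀ N, ∑ n ∈ range N, runningMean s (n + 1) ^ p ≤
      (p / (p - 1)) ^ p * ∑' n, s n ^ p := fun N =>
    (sum_runningMean_rpow_le hpq hnn N).trans <| mul_le_mul_of_nonneg_left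
      (hsum.sum_le_tsum _ fun n _ => rpow_nonneg (hnn n) p) (by positivity)
  have hnonneg : ∀ n, 0 ≤ runningMean s (n + 1) ^ p :=
    fun n => rpow_nonneg (runningMean.nonneg hnn _) p
  simp only [hmean]
  exact ⟨summable_of_sum_range_le hnonneg hbound, tsum_le_of_sum_range_le hnonneg hbound⟩

/-- Hardy's inequality for nonincreasing nonnegative sequences: if `∑ s_n^p < ∞`
with `p > 1` and `σ_n = (n+1)⁻¹ ∑_{j=0}^n s_j`, then
`∑ σ_n^p ≤ (p/(p−1))^p ∑ s_n^p`. -/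
theorem hardy_inequality (p : ℝ) (hp : 1 < p) (s : ℕ → ℝ)
    (hnn : ∀ n, 0 ≤ s n) (hmono : Antitone s)
    (hsum : Summable fun n => s n ^ p) :
    Summable (fun n : ℕ => ((∑ j ∈ Finset.range (n + 1), s j) / (n + 1)) ^ p) ∧
    ∑' n : ℕ, ((∑ j ∈ Finset.range (n + 1), s j) / (n + 1)) ^ p ≤
      (p / (p - 1)) ^ p * ∑' n : ℕ, s n ^ p :=
  hardy_inequality_general p hp s hnn hsum
end

section
/- Let E₁ and E₂ be finite spectral decompositions: suppose P₁,…,P_N are pairwise orthogonal projections summing to the identity on a Hilbert space H, likewise Q₁,…,Q_M, and suppose Φ(i,j) = Σ_{r} φ_r(i)·ψ_r(j) with Σ_r (sup_i |φ_r(i)|)(sup_j |ψ_r(j)|) ≤ K. Then for every bounded operator T on H, ‖Σ_{i,j} Φ(i,j)·P_i T Q_j‖ ≤ K·‖T‖. -/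
/-!
Each rank-one piece `φ_r ⊗ ψ_r` of the symbol acts as `T ↦ A_r T B_r` with
`A_r = ∑ i, φ_r(i) P_i` and `B_r = ∑ j, ψ_r(j) Q_j`. For a resolution of the identity into
orthogonal projections, Pythagoras gives `‖∑ i, c_i P_i‖ ≤ sup_i |c_i|`, so the `r`-th piece has
norm at most `‖φ_r‖_∞ ‖T‖ ‖ψ_r‖_∞`, and summing over `r` gives the bound.
-/

open scoped InnerProductSpace

theorem nonempty_of_sum_eq_id {𝕜 H ι : Type*} [NontriviallyNormedField 𝕜]
    [NormedAddCommGroup H] [NormedSpace 𝕜 H] [Nontrivial H] [Fintype ι] {P : ι → H →L[𝕜] H}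
    (hsum : ∑ i, P i = ContinuousLinearMap.id 𝕜 H) : Nonempty ι := by
  by_contra hι
  rw [not_nonempty_iff] at hι
  rw [Finset.univ_eq_empty, Finset.sum_empty] at hsum
  exact one_ne_zero (α := H →L[𝕜] H) hsum.symm

section OrthogonalProjections

variable {𝕜 H ι : Type*} [RCLike 𝕜] [NormedAddCommGroup H] [InnerProductSpace 𝕜 H] [Fintype ι]

theorem norm_sum_sq_of_pairwise_inner_eq_zero {f : ι → H}
    (hf : Pairwise fun i j => ⟪f i, f j⟫_𝕜 = 0) :
    ‖∑ i, f i‖ ^ 2 = ∑ i, ‖f i‖ ^ 2 := by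
  rw [← inner_self_eq_norm_sq (𝕜 := 𝕜), sum_inner, map_sum]
  refine Finset.sum_congr rfl fun i _ => ?_
  rw [inner_sum, Finset.sum_eq_single_of_mem i (Finset.mem_univ i)
    fun j _ hji => hf (Ne.symm hji), inner_self_eq_norm_sq]

variable [CompleteSpace H]

theorem IsSelfAdjoint.inner_apply_eq_zero_of_comp_eq_zero {A B : H →L[𝕜] H}
    (hA : IsSelfAdjoint A) (hAB : A ∘L B = 0) (x y : H) : ⟪A x, B y⟫_𝕜 = 0 := by
  rw [← ContinuousLinearMap.adjoint_inner_right, hA.adjoint_eq, ← ContinuousLinearMap.comp_apply,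
    hAB, zero_apply, inner_zero_right]

theorem norm_sum_smul_le_of_orthogonal_projections {P : ι → H →L[𝕜] H}
    (hsa : ∀ i, IsSelfAdjoint (P i)) (horth : Pairwise fun i j => P i ∘L P j = 0)
    (hsum : ∑ i, P i = ContinuousLinearMap.id 𝕜 H) {c : ι → 𝕜} {u : ℝ} (hu : 0 ≤ u)
    (hc : ∀ i, ‖c i‖ ≤ u) : ‖∑ i, c i • P i‖ ≤ u := by
  refine ContinuousLinearMap.opNorm_le_bound _ hu fun x => ?_
  have horthx : Pairwise fun i j => ⟪P i x, P j x⟫_𝕜 = 0 := fun i j hij =>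
    (hsa i).inner_apply_eq_zero_of_comp_eq_zero (horth hij) x x
  have hx : ∑ i, ‖P i x‖ ^ 2 = ‖x‖ ^ 2 := by
    rw [← norm_sum_sq_of_pairwise_inner_eq_zero horthx, ← sum_apply, hsum,
      ContinuousLinearMap.id_apply]
  have hcx : Pairwise fun i j => ⟪c i • P i x, c j • P j x⟫_𝕜 = 0 := fun i j hij => by
    simp only [inner_smul_left, inner_smul_right, horthx hij, mul_zero]
  refine le_of_pow_le_pow_left₀ two_ne_zero (by positivity) ?_
  calc ‖(∑ i, c i • P i) x‖ ^ 2 = ∑ i, ‖c i • P i x‖ ^ 2 := by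
        simp only [sum_apply, smul_apply]
        exact norm_sum_sq_of_pairwise_inner_eq_zero hcx
    _ ≤ ∑ i, u ^ 2 * ‖P i x‖ ^ 2 := by
        gcongr with i
        rw [norm_smul, mul_pow]
        gcongr
        exact hc i
    _ = (u * ‖x‖) ^ 2 := by rw [← Finset.mul_sum, hx, mul_pow]

end OrthogonalProjections

theorem ContinuousLinearMap.sum_smul_comp_comp_sum_smul {𝕜 E F G D ι κ : Type*} [NormedField 𝕜]
    [NormedAddCommGroup E] [NormedSpace 𝕜 E] [NormedAddCommGroup F] [NormedSpace 𝕜 F]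
    [NormedAddCommGroup G] [NormedSpace 𝕜 G] [NormedAddCommGroup D] [NormedSpace 𝕜 D]
    [Fintype ι] [Fintype κ] (a : ι → 𝕜) (X : ι → F →L[𝕜] G) (T : E →L[𝕜] F)
    (b : κ → 𝕜) (Y : κ → D →L[𝕜] E) :
    (∑ i, a i • X i) ∘L T ∘L (∑ j, b j • Y j) = ∑ i, ∑ j, (a i * b j) • (X i ∘L T ∘L Y j) := by
  simp only [ContinuousLinearMap.finsetSum_comp, ContinuousLinearMap.comp_finsetSum,
    ContinuousLinearMap.smul_comp, ContinuousLinearMap.comp_smul, Finset.smul_sum, smul_smul]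
  rw [Finset.sum_comm]
  simp only [mul_comm]

theorem schur_multiplier_bound_general {H : Type*} [NormedAddCommGroup H]
    [InnerProductSpace ℂ H] [CompleteSpace H]
    (N M : ℕ) (P : Fin N → H →L[ℂ] H) (Q : Fin M → H →L[ℂ] H)
    (hPsa : ∀ i, IsSelfAdjoint (P i))
    (hPorth : ∀ i i', i ≠ i' → P i ∘L P i' = 0)
    (hPsum : ∑ i, P i = ContinuousLinearMap.id ℂ H)
    (hQsa : ∀ j, IsSelfAdjoint (Q j))
    (hQorth : ∀ j j', j ≠ j' → Q j ∘L Q j' = 0)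
    (hQsum : ∑ j, Q j = ContinuousLinearMap.id ℂ H)
    (Φ : Fin N → Fin M → ℂ) (K : ℝ)
    (φ : ℕ → Fin N → ℂ) (ψ : ℕ → Fin M → ℂ) (u v : ℕ → ℝ)
    (hu : ∀ r i, ‖φ r i‖ ≤ u r)
    (hv : ∀ r j, ‖ψ r j‖ ≤ v r)
    (huv : Summable fun r => u r * v r)
    (hK : ∑' r, u r * v r ≤ K)
    (hrep : ∀ i j, Φ i j = ∑' r, φ r i * ψ r j)
    (T : H →L[ℂ] H) :
    ‖∑ i, ∑ j, Φ i j • (P i ∘L T ∘L Q j)‖ ≤ K * ‖T‖ := by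
  rcases subsingleton_or_nontrivial H with hH | hH
  · simp [Subsingleton.elim T 0]
  obtain ⟨i₀⟩ := nonempty_of_sum_eq_id hPsum
  obtain ⟨j₀⟩ := nonempty_of_sum_eq_id hQsum
  have hu0 r : 0 ≤ u r := (norm_nonneg _).trans (hu r i₀)
  have hv0 r : 0 ≤ v r := (norm_nonneg _).trans (hv r j₀)
  have hΦ i j : HasSum (fun r => φ r i * ψ r j) (Φ i j) := by
    rw [hrep]
    refine (huv.of_norm_bounded fun r => ?_).hasSum
    rw [norm_mul]
    exact mul_le_mul (hu r i) (hv r j) (norm_nonneg _) (hu0 r)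
  have hpieces : HasSum (fun r => (∑ i, φ r i • P i) ∘L T ∘L ∑ j, ψ r j • Q j)
      (∑ i, ∑ j, Φ i j • (P i ∘L T ∘L Q j)) := by
    simp only [ContinuousLinearMap.sum_smul_comp_comp_sum_smul]
    exact hasSum_sum fun i _ => hasSum_sum fun j _ => (hΦ i j).smul_const _
  refine (hpieces.norm_le_of_bounded (huv.hasSum.mul_right ‖T‖) fun r => ?_).trans
    (mul_le_mul_of_nonneg_right hK (norm_nonneg T))
  have hA := norm_sum_smul_le_of_orthogonal_projections hPsa hPorth hPsum (hu0 r) (hu r)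
  have hB := norm_sum_smul_le_of_orthogonal_projections hQsa hQorth hQsum (hv0 r) (hv r)
  calc _ ≤ ‖∑ i, φ r i • P i‖ * (‖T‖ * ‖∑ j, ψ r j • Q j‖) :=
        (ContinuousLinearMap.opNorm_comp_le _ _).trans
          (mul_le_mul_of_nonneg_left (ContinuousLinearMap.opNorm_comp_le _ _) (norm_nonneg _))
    _ ≤ u r * (‖T‖ * v r) :=
        mul_le_mul hA (mul_le_mul_of_nonneg_left hB (norm_nonneg T)) (by positivity) (hu0 r)
    _ = u r * v r * ‖T‖ := by ring

/-- Schur multiplier bound for finite spectral decompositions: if `P_1, …, P_N` and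
`Q_1, …, Q_M` are families of pairwise orthogonal (self-adjoint idempotent) projections
summing to the identity, and `Φ(i,j) = ∑_r φ_r(i) ψ_r(j)` with
`∑_r ‖φ_r‖_∞ ‖ψ_r‖_∞ ≤ K`, then `‖∑_{i,j} Φ(i,j) P_i T Q_j‖ ≤ K ‖T‖`. -/
theorem schur_multiplier_bound {H : Type*} [NormedAddCommGroup H]
    [InnerProductSpace ℂ H] [CompleteSpace H]
    (N M : ℕ) (P : Fin N → H →L[ℂ] H) (Q : Fin M → H →L[ℂ] H)
    (hPsa : ∀ i, IsSelfAdjoint (P i))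
    (hPidem : ∀ i, P i ∘L P i = P i)
    (hPorth : ∀ i i', i ≠ i' → P i ∘L P i' = 0)
    (hPsum : ∑ i, P i = ContinuousLinearMap.id ℂ H)
    (hQsa : ∀ j, IsSelfAdjoint (Q j))
    (hQidem : ∀ j, Q j ∘L Q j = Q j)
    (hQorth : ∀ j j', j ≠ j' → Q j ∘L Q j' = 0)
    (hQsum : ∑ j, Q j = ContinuousLinearMap.id ℂ H)
    (Φ : Fin N → Fin M → ℂ) (K : ℝ)
    (φ : ℕ → Fin N → ℂ) (ψ : ℕ → Fin M → ℂ) (u v : ℕ → ℝ)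
    (hu : ∀ r i, ‖φ r i‖ ≤ u r)
    (hv : ∀ r j, ‖ψ r j‖ ≤ v r)
    (huv : Summable fun r => u r * v r)
    (hK : ∑' r, u r * v r ≤ K)
    (hrep : ∀ i j, Φ i j = ∑' r, φ r i * ψ r j)
    (T : H →L[ℂ] H) :
    ‖∑ i, ∑ j, Φ i j • (P i ∘L T ∘L Q j)‖ ≤ K * ‖T‖ :=
  schur_multiplier_bound_general N M P Q hPsa hPorth hPsum hQsa hQorth hQsum Φ K φ ψ u v hu hv huv
    hK hrep T
end
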